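/- arXiv:2412.03199 — 4 statements merged into one kernel-verified Lean document; each statement's English description precedes it below -/
import Mathlib

section
/- Fix m ≥ 1 and n = 4m, and define 𝓛, A, B as follows: 𝓛 is the set of pairs (U, V) of subsets of [n] each containing exactly one element from every interval I_i = {4(i−1)+1, ..., 4i}, A = {(U,V) ∈ 𝓛 : |U ∩ V| odd}, B = 𝓛 \ A. Let L = {(U,V) : U ∩ V ≠ ∅}. Then |A ∩ L| − |B ∩ L| = |A| − |B ∩ L| = 12^m − 2^{3m}. -/
/-!
Encode a set meeting each block of four consecutive points exactly once by the function that picks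
its point in each block. Then `|U ∩ V|` is the number of blocks on which the two choice functions
agree, so for every `x` the weighted count `∑_{(U,V) ∈ 𝓛} x ^ |U ∩ V|` factors over the blocks as
`(4x + 12) ^ m`. Since `A ⊆ L` and the pairs of `B` outside `L` are the disjoint ones,
`|A| - |B ∩ L|` is the value at `x = 0` (the `12 ^ m` disjoint pairs) minus the value at `x = -1`
(which is `|B| - |A| = 8 ^ m`).
-/

open Finset

lemma sum_sum_prod_eq_pow {ι α β R : Type*} [Fintype ι] [DecidableEq ι] [Fintype α] [Fintype β]
    [CommSemiring R] (w : α → β → R) :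
    ∑ f : ι → α, ∑ g : ι → β, ∏ i, w (f i) (g i) = (∑ a, ∑ b, w a b) ^ Fintype.card ι := by
  rw [← Fintype.sum_prod_type', ← Fintype.sum_prod_type', ← card_univ, ← prod_const,
    Fintype.prod_sum, ← (Equiv.arrowProdEquivProdArrow ι (fun _ => α) (fun _ => β)).sum_comp]
  rfl

section ParityOfIntersections

variable {α β : Type*} [Fintype α] [DecidableEq β] (s : Finset α) (t : α → Finset β)

lemma filter_odd_card_subset :
    s.filter (fun x => Odd #(t x)) ⊆ univ.filter (fun x => t x ≠ ∅) := by
  intro x hx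
  simp only [mem_filter, mem_univ, true_and] at hx ⊢
  rintro h
  simp [h] at hx

/-- Pointwise, `0 ^ c` is the indicator of `c = 0` and `(-1) ^ c = [c even] - [c odd]`. -/
lemma card_odd_sub_card_even_nonempty [DecidableEq α] :
    (#(s.filter fun x => Odd #(t x)) : ℤ) -
        #((s \ s.filter fun x => Odd #(t x)) ∩ univ.filter fun x => t x ≠ ∅) =
      ∑ x ∈ s, (0 : ℤ) ^ #(t x) - ∑ x ∈ s, (-1 : ℤ) ^ #(t x) := by
  have : (s \ s.filter fun x => Odd #(t x)) ∩ univ.filter (fun x => t x ≠ ∅) =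
      s.filter fun x => ¬Odd #(t x) ∧ t x ≠ ∅ := by
    ext; simp only [mem_inter, mem_sdiff, mem_filter, mem_univ, true_and]; tauto
  rw [this, natCast_card_filter, natCast_card_filter, ← sum_sub_distrib, ← sum_sub_distrib]
  refine sum_congr rfl fun x _ => ?_
  rcases Nat.even_or_odd #(t x) with h | h
  · by_cases h0 : t x = ∅
    · simp [h0]
    · simp [h.neg_one_pow, Nat.not_odd_iff_even.2 h, h0]
  · simp [h.neg_one_pow, h, h.pos.ne']

end ParityOfIntersections

section Transversal

variable {k m : ℕ}

def blockPoint (i : Fin m) (a : Fin k) : Fin (k * m) :=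
  ⟨k * i + a, calc
    k * i + a < k * (i + 1) := by rw [Nat.mul_succ]; exact Nat.add_lt_add_left a.2 _
    _ ≤ k * m := Nat.mul_le_mul_left k i.2⟩

lemma blockPoint_val_div (i : Fin m) (a : Fin k) : (blockPoint i a : ℕ) / k = i := by
  rw [blockPoint, Nat.mul_add_div (Fin.pos a), Nat.div_eq_of_lt a.2, add_zero]

lemma blockPoint_val_mod (i : Fin m) (a : Fin k) : (blockPoint i a : ℕ) % k = a := by
  rw [blockPoint, Nat.mul_add_mod_self_left, Nat.mod_eq_of_lt a.2]

lemma blockPoint_inj {i j : Fin m} {a b : Fin k} :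
    blockPoint i a = blockPoint j b ↔ i = j ∧ a = b := by
  refine ⟨fun h => ⟨Fin.ext ?_, Fin.ext ?_⟩, fun ⟨hij, hab⟩ => hij ▸ hab ▸ rfl⟩
  · rw [← blockPoint_val_div i a, h, blockPoint_val_div]
  · rw [← blockPoint_val_mod i a, h, blockPoint_val_mod]

lemma mem_block_iff (x : Fin (k * m)) (i : ℕ) :
    k * i ≤ x ∧ (x : ℕ) < k * i + k ↔ (x : ℕ) / k = i := by
  have hk : 0 < k := Nat.pos_of_mul_pos_right (Fin.pos x)
  rw [Nat.div_eq_iff hk, Nat.mul_comm i k]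
  omega

def transversal (f : Fin m → Fin k) : Finset (Fin (k * m)) :=
  univ.image fun i => blockPoint i (f i)

lemma mem_transversal {f : Fin m → Fin k} {x : Fin (k * m)} :
    x ∈ transversal f ↔ ∃ i, blockPoint i (f i) = x := by
  simp [transversal]

variable (k m) in
def IsTransversal (U : Finset (Fin (k * m))) : Prop :=
  ∀ i < m, (U.filter fun x => k * i ≤ x.1 ∧ x.1 < k * i + k).card = 1

instance : DecidablePred (IsTransversal k m) := fun _ => by
  unfold IsTransversal; infer_instance

lemma filter_block_transversal (f : Fin m → Fin k) (i : Fin m) :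
    (transversal f).filter (fun x => k * i ≤ x.1 ∧ x.1 < k * i + k) = {blockPoint i (f i)} := by
  ext x
  simp only [mem_filter, mem_transversal, mem_singleton, mem_block_iff]
  constructor
  · rintro ⟨⟨j, rfl⟩, hj⟩
    rw [blockPoint_val_div] at hj
    rw [Fin.ext hj]
  · rintro rfl
    exact ⟨⟨i, rfl⟩, blockPoint_val_div _ _⟩

lemma isTransversal_transversal (f : Fin m → Fin k) : IsTransversal k m (transversal f) :=
  fun i hi => by rw [filter_block_transversal f ⟨i, hi⟩, card_singleton]

lemma transversal_injective : Function.Injective (transversal (k := k) (m := m)) := by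
  intro f g h
  funext i
  have hmem : blockPoint i (f i) ∈ transversal g := h ▸ mem_transversal.2 ⟨i, rfl⟩
  obtain ⟨j, hj⟩ := mem_transversal.1 hmem
  obtain ⟨rfl, hfg⟩ := blockPoint_inj.1 hj
  exact hfg.symm

lemma exists_transversal_eq {U : Finset (Fin (k * m))} (hU : IsTransversal k m U) :
    ∃ f, transversal f = U := by
  have hk : ∀ x : Fin (k * m), 0 < k := fun x => Nat.pos_of_mul_pos_right (Fin.pos x)
  choose x hx using fun i : Fin m => card_eq_one.1 (hU i i.2)
  have hmem i : x i ∈ U ∧ (x i : ℕ) / k = i := by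
    have := mem_singleton_self (x i)
    rw [← hx i, mem_filter, mem_block_iff] at this
    exact this
  refine ⟨fun i => ⟨x i % k, Nat.mod_lt _ (hk (x i))⟩, ?_⟩
  have hpoint i : blockPoint i ⟨x i % k, Nat.mod_lt _ (hk (x i))⟩ = x i :=
    Fin.ext (by rw [blockPoint]; dsimp only; rw [← (hmem i).2, Nat.div_add_mod])
  ext y
  simp only [mem_transversal, hpoint]
  refine ⟨fun ⟨i, hi⟩ => hi ▸ (hmem i).1, fun hy => ?_⟩
  have hi : (y : ℕ) / k < m := Nat.div_lt_of_lt_mul y.2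
  refine ⟨⟨_, hi⟩, ?_⟩
  have : y ∈ U.filter (fun x => k * (y / k) ≤ x.1 ∧ x.1 < k * (y / k) + k) :=
    mem_filter.2 ⟨hy, (mem_block_iff _ _).2 rfl⟩
  rw [hx ⟨_, hi⟩] at this
  exact (mem_singleton.1 this).symm

lemma image_transversal :
    univ.image (transversal (k := k) (m := m)) = univ.filter (IsTransversal k m) := by
  ext U
  simp only [mem_image, mem_univ, true_and, mem_filter]
  exact ⟨fun ⟨f, hf⟩ => hf ▸ isTransversal_transversal f, exists_transversal_eq⟩

lemma sum_transversal_pairs {R : Type*} [AddCommMonoid R]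
    (w : Finset (Fin (k * m)) × Finset (Fin (k * m)) → R) :
    ∑ p ∈ univ.filter (fun p => IsTransversal k m p.1 ∧ IsTransversal k m p.2), w p =
      ∑ f, ∑ g, w (transversal f, transversal g) := by
  rw [← univ_product_univ, filter_product, ← image_transversal, sum_product,
    sum_image transversal_injective.injOn]
  exact sum_congr rfl fun f _ => sum_image transversal_injective.injOn

lemma card_inter_transversal (f g : Fin m → Fin k) :
    #(transversal f ∩ transversal g) = #{i | f i = g i} := by
  have : transversal f ∩ transversal g =
      ({i | f i = g i} : Finset (Fin m)).image fun i => blockPoint i (f i) := by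
    ext x
    simp only [mem_inter, mem_transversal, mem_image, mem_filter, mem_univ, true_and]
    constructor
    · rintro ⟨⟨i, rfl⟩, j, hj⟩
      obtain ⟨rfl, h⟩ := blockPoint_inj.1 hj
      exact ⟨j, h.symm, rfl⟩
    · rintro ⟨i, h, rfl⟩
      exact ⟨⟨i, rfl⟩, i, by rw [h]⟩
  rw [this, card_image_of_injective _ fun i j h => (blockPoint_inj.1 h).1]

lemma sum_pow_card_eq {R : Type*} [CommRing R] (x : R) :
    ∑ f : Fin m → Fin k, ∑ g : Fin m → Fin k, x ^ #{i | f i = g i} = (k * x + k * (k - 1)) ^ m := by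
  simp_rw [← prod_const, prod_filter]
  refine (sum_sum_prod_eq_pow fun a b : Fin k => if a = b then x else 1).trans ?_
  rw [Fintype.card_fin]
  congr 1
  have hsplit (a b : Fin k) : (if a = b then x else 1) = 1 + if a = b then x - 1 else 0 := by
    split_ifs <;> ring
  simp only [hsplit, sum_add_distrib, sum_ite_eq, mem_univ, if_true, sum_const, card_univ,
    Fintype.card_fin, nsmul_eq_mul, mul_one]
  ring

lemma sum_pow_card_inter_of_isTransversal {R : Type*} [CommRing R] (x : R) :
    ∑ p ∈ univ.filter (fun p : Finset (Fin (k * m)) × Finset (Fin (k * m)) =>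
        IsTransversal k m p.1 ∧ IsTransversal k m p.2), x ^ #(p.1 ∩ p.2) =
      (k * x + k * (k - 1)) ^ m := by
  rw [sum_transversal_pairs]
  simp_rw [card_inter_transversal]
  exact sum_pow_card_eq x

end Transversal

theorem stmt_7_general (m : ℕ) (n : ℕ) (hn : n = 4 * m) :
    let 𝓛 : Finset (Finset (Fin n) × Finset (Fin n)) :=
      Finset.univ.filter (fun p =>
        (∀ i < m, (p.1.filter (fun x => 4 * i ≤ x.1 ∧ x.1 < 4 * i + 4)).card = 1) ∧
        (∀ i < m, (p.2.filter (fun x => 4 * i ≤ x.1 ∧ x.1 < 4 * i + 4)).card = 1))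
    let A := 𝓛.filter (fun p => Odd (p.1 ∩ p.2).card)
    let B := 𝓛 \ A
    let L : Finset (Finset (Fin n) × Finset (Fin n)) :=
      Finset.univ.filter (fun p => p.1 ∩ p.2 ≠ ∅)
    ((A ∩ L).card : ℤ) - ((B ∩ L).card : ℤ) = (A.card : ℤ) - ((B ∩ L).card : ℤ) ∧
    (A.card : ℤ) - ((B ∩ L).card : ℤ) = 12 ^ m - 2 ^ (3 * m) := by
  subst hn
  intro 𝓛 A B L
  have hsum (x : ℤ) : ∑ p ∈ 𝓛, x ^ #(p.1 ∩ p.2) = (4 * x + 12) ^ m := by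
    rw [show 𝓛 = univ.filter fun p => IsTransversal 4 m p.1 ∧ IsTransversal 4 m p.2 from rfl,
      sum_pow_card_inter_of_isTransversal]
    norm_num
  refine ⟨by rw [inter_eq_left.2 (filter_odd_card_subset 𝓛 fun p => p.1 ∩ p.2)], ?_⟩
  rw [card_odd_sub_card_even_nonempty 𝓛 fun p => p.1 ∩ p.2, hsum, hsum]
  norm_num [pow_mul]

/-- `[n]` is modelled as `Fin n` (0-indexed), the interval `I_i` (for `i < m`) being
`{4*i, ..., 4*i+3}`. -/
theorem stmt_7 (m : ℕ) (hm : 1 ≤ m) (n : ℕ) (hn : n = 4 * m) :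
    let 𝓛 : Finset (Finset (Fin n) × Finset (Fin n)) :=
      Finset.univ.filter (fun p =>
        (∀ i < m, (p.1.filter (fun x => 4 * i ≤ x.1 ∧ x.1 < 4 * i + 4)).card = 1) ∧
        (∀ i < m, (p.2.filter (fun x => 4 * i ≤ x.1 ∧ x.1 < 4 * i + 4)).card = 1))
    let A := 𝓛.filter (fun p => Odd (p.1 ∩ p.2).card)
    let B := 𝓛 \ A
    let L : Finset (Finset (Fin n) × Finset (Fin n)) :=
      Finset.univ.filter (fun p => p.1 ∩ p.2 ≠ ∅)
    ((A ∩ L).card : ℤ) - ((B ∩ L).card : ℤ) = (A.card : ℤ) - ((B ∩ L).card : ℤ) ∧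
    (A.card : ℤ) - ((B ∩ L).card : ℤ) = 12 ^ m - 2 ^ (3 * m) :=
  stmt_7_general m n hn
end

section
/- Fix m ≥ 1, n = 4m. Define 𝓛^X as the set of subsets of {x_1,...,x_n} containing exactly one element from each interval I_i^X = {x_{4(i−1)+1}, ..., x_{4i}}, and 𝓛^Y analogously on {y_1,...,y_n}. Define A as the set of pairs (U, V) ∈ 𝓛^X × 𝓛^Y such that the number of indices i with x_i ∈ U and y_i ∈ V is odd, and B as its complement in 𝓛^X × 𝓛^Y. Then for every S ⊆ 𝓛^X and T ⊆ 𝓛^Y, setting R = S × T, we have | |R ∩ A| − |R ∩ B| | ≤ 2^{3m}. -/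
open Finset

namespace Stmt10

variable {m n : ℕ}

/-- The element of block `i` selected by `g`. -/
def epos (hn : n = 4 * m) (g : Fin m → Fin 4) (i : Fin m) : Fin n :=
  ⟨4 * i.1 + (g i).1, by have h1 := i.2; have h2 := (g i).2; omega⟩

lemma epos_inj (hn : n = 4 * m) (g : Fin m → Fin 4) : Function.Injective (epos hn g) := by
  intro i j hij
  have hv : 4 * i.1 + (g i).1 = 4 * j.1 + (g j).1 := congrArg Fin.val hij
  have h2 := (g i).2; have h3 := (g j).2
  exact Fin.ext (by omega)

/-- The transversal set determined by `g`. -/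
def enc (hn : n = 4 * m) (g : Fin m → Fin 4) : Finset (Fin n) :=
  Finset.image (epos hn g) Finset.univ

lemma mem_enc {hn : n = 4 * m} {g : Fin m → Fin 4} {x : Fin n} :
    x ∈ enc hn g ↔ ∃ i, epos hn g i = x := by simp [enc]

lemma enc_trans (hn : n = 4 * m) (g : Fin m → Fin 4) :
    ∀ i < m, ((enc hn g).filter (fun x => 4 * i ≤ x.1 ∧ x.1 < 4 * i + 4)).card = 1 := by
  intro i him
  have h : (enc hn g).filter (fun x => 4 * i ≤ x.1 ∧ x.1 < 4 * i + 4)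
      = {epos hn g ⟨i, him⟩} := by
    ext x
    simp only [mem_filter, mem_enc, mem_singleton]
    constructor
    · rintro ⟨⟨j, rfl⟩, h1, h2⟩
      have hj1 : j.1 = i := by
        simp only [epos] at h1 h2
        have := (g j).2
        omega
      have hj : j = (⟨i, him⟩ : Fin m) := Fin.ext hj1
      rw [hj]
    · rintro rfl
      refine ⟨⟨_, rfl⟩, ?_, ?_⟩ <;>
        · have := (g ⟨i, him⟩).2; simp only [epos]; omega
  rw [h, card_singleton]

lemma enc_inj (hn : n = 4 * m) : Function.Injective (enc hn) := by
  intro g h hgh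
  funext i
  have h1 : epos hn g i ∈ enc hn h := hgh ▸ mem_enc.mpr ⟨i, rfl⟩
  obtain ⟨j, hj⟩ := mem_enc.mp h1
  have hv : 4 * j.1 + (h j).1 = 4 * i.1 + (g i).1 := congrArg Fin.val hj
  have h2 := (g i).2; have h3 := (h j).2
  have hji : j = i := Fin.ext (by omega)
  subst hji
  exact Fin.ext (by omega)

lemma exists_enc (hn : n = 4 * m) (U : Finset (Fin n))
    (hU : ∀ i < m, (U.filter (fun x => 4 * i ≤ x.1 ∧ x.1 < 4 * i + 4)).card = 1) :
    ∃ g, enc hn g = U := by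
  have h : ∀ i : Fin m, ∃ u : Fin n,
      U.filter (fun x => 4 * i.1 ≤ x.1 ∧ x.1 < 4 * i.1 + 4) = {u} :=
    fun i => Finset.card_eq_one.mp (hU i.1 i.2)
  choose u hu using h
  have hu' : ∀ i, u i ∈ U ∧ 4 * i.1 ≤ (u i).1 ∧ (u i).1 < 4 * i.1 + 4 := by
    intro i
    have hmem : u i ∈ U.filter (fun x => 4 * i.1 ≤ x.1 ∧ x.1 < 4 * i.1 + 4) :=
      (hu i) ▸ Finset.mem_singleton_self _
    simpa using hmem
  refine ⟨fun i => ⟨(u i).1 - 4 * i.1, by have := (hu' i).2; omega⟩, ?_⟩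
  have hpos : ∀ i, epos hn (fun i => ⟨(u i).1 - 4 * i.1, by have := (hu' i).2; omega⟩) i = u i := by
    intro i
    have := (hu' i).2
    exact Fin.ext (by simp only [epos]; omega)
  apply Finset.Subset.antisymm
  · intro x hx
    obtain ⟨i, rfl⟩ := mem_enc.mp hx
    rw [hpos i]
    exact (hu' i).1
  · intro x hx
    have hxn : x.1 < 4 * m := hn ▸ x.2
    have him : x.1 / 4 < m := by omega
    have hxf : x ∈ U.filter (fun y => 4 * (x.1 / 4) ≤ y.1 ∧ y.1 < 4 * (x.1 / 4) + 4) := by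
      simp only [mem_filter]
      exact ⟨hx, by omega, by omega⟩
    have : x = u ⟨x.1 / 4, him⟩ := by
      have := hu ⟨x.1 / 4, him⟩
      rw [this] at hxf
      exact Finset.mem_singleton.mp hxf
    rw [this, ← hpos ⟨x.1 / 4, him⟩]
    exact mem_enc.mpr ⟨_, rfl⟩

lemma inter_enc (hn : n = 4 * m) (g h : Fin m → Fin 4) :
    enc hn g ∩ enc hn h = Finset.image (epos hn g) (univ.filter fun i => g i = h i) := by
  ext x
  simp only [mem_inter, mem_enc, mem_image, mem_filter, mem_univ, true_and]
  constructor
  · rintro ⟨⟨i, rfl⟩, j, hj⟩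
    have hv : 4 * j.1 + (h j).1 = 4 * i.1 + (g i).1 := congrArg Fin.val hj
    have h2 := (g i).2; have h3 := (h j).2
    have hji : j = i := Fin.ext (by omega)
    subst hji
    exact ⟨j, Fin.ext (by omega), rfl⟩
  · rintro ⟨i, hgh, rfl⟩
    exact ⟨⟨i, rfl⟩, i, by simp only [epos, hgh]⟩

lemma card_inter_enc (hn : n = 4 * m) (g h : Fin m → Fin 4) :
    (enc hn g ∩ enc hn h).card = (univ.filter fun i => g i = h i).card := by
  rw [inter_enc hn g h, Finset.card_image_of_injective _ (epos_inj hn g)]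

lemma neg_one_pow_inter (hn : n = 4 * m) (g h : Fin m → Fin 4) :
    ((-1 : ℤ)) ^ (enc hn g ∩ enc hn h).card = ∏ i, (if g i = h i then (-1 : ℤ) else 1) := by
  rw [card_inter_enc hn g h, Finset.prod_ite, prod_const, prod_const, one_pow, mul_one]

lemma sum_signs (hn : n = 4 * m) (h h' : Fin m → Fin 4) :
    (∑ g : Fin m → Fin 4,
      ((-1 : ℤ) ^ (enc hn g ∩ enc hn h).card * (-1) ^ (enc hn g ∩ enc hn h').card))
      = if h = h' then (4 : ℤ) ^ m else 0 := by
  have step : ∀ g : Fin m → Fin 4,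
      (-1 : ℤ) ^ (enc hn g ∩ enc hn h).card * (-1) ^ (enc hn g ∩ enc hn h').card
      = ∏ i, ((if g i = h i then (-1:ℤ) else 1) * (if g i = h' i then (-1:ℤ) else 1)) := by
    intro g
    rw [neg_one_pow_inter hn g h, neg_one_pow_inter hn g h', ← Finset.prod_mul_distrib]
  simp_rw [step]
  rw [← Fintype.prod_sum
    (fun i (a : Fin 4) => (if a = h i then (-1:ℤ) else 1) * (if a = h' i then (-1:ℤ) else 1))]
  have factor : ∀ i, (∑ a : Fin 4,
      (if a = h i then (-1:ℤ) else 1) * (if a = h' i then (-1:ℤ) else 1))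
      = if h i = h' i then 4 else 0 := by
    intro i
    have key : ∀ b b' : Fin 4, (∑ a : Fin 4,
        (if a = b then (-1:ℤ) else 1) * (if a = b' then (-1:ℤ) else 1))
        = if b = b' then 4 else 0 := by decide
    exact key (h i) (h' i)
  simp_rw [factor]
  by_cases hhh : h = h'
  · subst hhh; simp
  · rw [if_neg hhh]
    obtain ⟨i, hi⟩ := Function.ne_iff.mp hhh
    exact Finset.prod_eq_zero (mem_univ i) (if_neg hi)

lemma sum_over_X (hn : n = 4 * m) (f : Finset (Fin n) → ℤ) :
    (∑ U ∈ univ.filter (fun U : Finset (Fin n) =>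
        ∀ i < m, (U.filter (fun x => 4 * i ≤ x.1 ∧ x.1 < 4 * i + 4)).card = 1), f U)
    = ∑ g : Fin m → Fin 4, f (enc hn g) := by
  symm
  apply Finset.sum_bij (fun g _ => enc hn g)
  · intro g _
    simp only [mem_filter, mem_univ, true_and]
    exact enc_trans hn g
  · intro g _ g' _ hgg'
    exact enc_inj hn hgg'
  · intro U hU
    simp only [mem_filter, mem_univ, true_and] at hU
    obtain ⟨g, hg⟩ := exists_enc hn U hU
    exact ⟨g, mem_univ g, hg⟩
  · intro g _; rfl

lemma card_X (hn : n = 4 * m) :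
    (univ.filter (fun U : Finset (Fin n) =>
        ∀ i < m, (U.filter (fun x => 4 * i ≤ x.1 ∧ x.1 < 4 * i + 4)).card = 1)).card
      = 4 ^ m := by
  have h := sum_over_X hn (fun _ => (1 : ℤ))
  simp only [Finset.sum_const, nsmul_eq_mul, mul_one, card_univ] at h
  have h4 : Fintype.card (Fin m → Fin 4) = 4 ^ m := by
    rw [Fintype.card_fun]; simp
  rw [h4] at h
  exact_mod_cast h

lemma sum_X_signs (hn : n = 4 * m) (V V' : Finset (Fin n))
    (hV : ∀ i < m, (V.filter (fun x => 4 * i ≤ x.1 ∧ x.1 < 4 * i + 4)).card = 1)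
    (hV' : ∀ i < m, (V'.filter (fun x => 4 * i ≤ x.1 ∧ x.1 < 4 * i + 4)).card = 1) :
    (∑ U ∈ univ.filter (fun U : Finset (Fin n) =>
        ∀ i < m, (U.filter (fun x => 4 * i ≤ x.1 ∧ x.1 < 4 * i + 4)).card = 1),
      ((-1:ℤ) ^ (U ∩ V).card * (-1) ^ (U ∩ V').card))
    = if V = V' then (4:ℤ) ^ m else 0 := by
  obtain ⟨h, rfl⟩ := exists_enc hn V hV
  obtain ⟨h', rfl⟩ := exists_enc hn V' hV'
  rw [sum_over_X hn (fun U => (-1:ℤ) ^ (U ∩ enc hn h).card * (-1) ^ (U ∩ enc hn h').card),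
    sum_signs hn h h']
  simp only [(enc_inj hn).eq_iff]

end Stmt10

open Stmt10 Finset in
/-- `𝓛^X` and `𝓛^Y` are both modelled as transversal subsets of `Fin n` (0-indexed), the
interval `I_i` (for `i < m`) being `{4*i, ..., 4*i+3}`.  Under the identification
`x_i ↔ i ↔ y_i`, the number of indices `i` with `x_i ∈ U` and `y_i ∈ V` is `|U ∩ V|`. -/
theorem stmt_10 (m : ℕ) (hm : 1 ≤ m) (n : ℕ) (hn : n = 4 * m)
    (S T : Finset (Finset (Fin n)))
    (hS : ∀ U ∈ S, ∀ i < m, (U.filter (fun x => 4 * i ≤ x.1 ∧ x.1 < 4 * i + 4)).card = 1)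
    (hT : ∀ V ∈ T, ∀ i < m, (V.filter (fun x => 4 * i ≤ x.1 ∧ x.1 < 4 * i + 4)).card = 1) :
    let 𝓛 : Finset (Finset (Fin n) × Finset (Fin n)) :=
      Finset.univ.filter (fun p =>
        (∀ i < m, (p.1.filter (fun x => 4 * i ≤ x.1 ∧ x.1 < 4 * i + 4)).card = 1) ∧
        (∀ i < m, (p.2.filter (fun x => 4 * i ≤ x.1 ∧ x.1 < 4 * i + 4)).card = 1))
    let A := 𝓛.filter (fun p => Odd (p.1 ∩ p.2).card)
    let B := 𝓛 \ A
    let R := S ×ˢ T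
    |((R ∩ A).card : ℤ) - ((R ∩ B).card : ℤ)| ≤ 2 ^ (3 * m) := by
  intro 𝓛 A B R
  classical
  set X : Finset (Finset (Fin n)) := univ.filter (fun U : Finset (Fin n) =>
      ∀ i < m, (U.filter (fun x => 4 * i ≤ x.1 ∧ x.1 < 4 * i + 4)).card = 1) with hX
  have hSX : S ⊆ X := by
    intro U hU; rw [hX, mem_filter]; exact ⟨mem_univ _, hS U hU⟩
  have hTX : T ⊆ X := by
    intro V hV; rw [hX, mem_filter]; exact ⟨mem_univ _, hT V hV⟩
  have hR𝓛 : R ⊆ 𝓛 := by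
    intro p hp
    simp only [R, mem_product] at hp
    simp only [𝓛, mem_filter, mem_univ, true_and]
    exact ⟨hS _ hp.1, hT _ hp.2⟩
  have hRA : R ∩ A = R.filter (fun p => Odd (p.1 ∩ p.2).card) := by
    ext p
    simp only [mem_inter, mem_filter, A]
    constructor
    · rintro ⟨hp, _, hodd⟩; exact ⟨hp, hodd⟩
    · rintro ⟨hp, hodd⟩; exact ⟨hp, hR𝓛 hp, hodd⟩
  have hRB : R ∩ B = R.filter (fun p => ¬ Odd (p.1 ∩ p.2).card) := by
    ext p
    simp only [mem_inter, mem_filter, mem_sdiff, A, B]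
    constructor
    · rintro ⟨hp, h𝓛, hna⟩
      exact ⟨hp, fun hodd => hna ⟨h𝓛, hodd⟩⟩
    · rintro ⟨hp, hne⟩
      exact ⟨hp, hR𝓛 hp, fun h => hne h.2⟩
  set D : ℤ := ∑ U ∈ S, ∑ V ∈ T, (-1:ℤ) ^ (U ∩ V).card with hD
  have hDR : D = ((R ∩ B).card : ℤ) - ((R ∩ A).card : ℤ) := by
    have h1 : D = ∑ p ∈ S ×ˢ T, (-1:ℤ) ^ (p.1 ∩ p.2).card := by
      rw [hD, Finset.sum_product]
    have h2 : ∀ p ∈ S ×ˢ T, ((-1:ℤ) ^ (p.1 ∩ p.2).card)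
        = if Odd (p.1 ∩ p.2).card then -1 else 1 := by
      intro p _
      split
      · exact Odd.neg_one_pow ‹_›
      · exact (Nat.not_odd_iff_even.mp ‹_›).neg_one_pow
    rw [h1, Finset.sum_congr rfl h2, Finset.sum_ite, Finset.sum_const, Finset.sum_const,
      hRA, hRB]
    simp only [nsmul_eq_mul, mul_one, mul_neg_one]
    show -((R.filter (fun p => Odd (p.1 ∩ p.2).card)).card : ℤ) + _ = _
    ring
  have hcardS : (S.card : ℤ) ≤ 4 ^ m := by
    have h1 : S.card ≤ X.card := Finset.card_le_card hSX
    have h2 : X.card = 4 ^ m := card_X hn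
    exact_mod_cast h2 ▸ h1
  have hcardT : (T.card : ℤ) ≤ 4 ^ m := by
    have h1 : T.card ≤ X.card := Finset.card_le_card hTX
    have h2 : X.card = 4 ^ m := card_X hn
    exact_mod_cast h2 ▸ h1
  have key2 : D ^ 2 ≤ 2 ^ (6 * m) := by
    calc D ^ 2 ≤ (S.card : ℤ) * ∑ U ∈ S, (∑ V ∈ T, (-1:ℤ) ^ (U ∩ V).card) ^ 2 :=
          sq_sum_le_card_mul_sum_sq
      _ ≤ (S.card : ℤ) * ∑ U ∈ X, (∑ V ∈ T, (-1:ℤ) ^ (U ∩ V).card) ^ 2 := by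
          apply mul_le_mul_of_nonneg_left _ (by positivity)
          exact Finset.sum_le_sum_of_subset_of_nonneg hSX (fun U _ _ => sq_nonneg _)
      _ = (S.card : ℤ) * ∑ V ∈ T, ∑ V' ∈ T, ∑ U ∈ X,
            ((-1:ℤ) ^ (U ∩ V).card * (-1) ^ (U ∩ V').card) := by
          congr 1
          simp_rw [sq, Finset.sum_mul_sum]
          rw [Finset.sum_comm]
          exact Finset.sum_congr rfl fun V _ => Finset.sum_comm
      _ = (S.card : ℤ) * ∑ V ∈ T, ∑ V' ∈ T, (if V = V' then (4:ℤ) ^ m else 0) := by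
          congr 1
          refine Finset.sum_congr rfl fun V hV => Finset.sum_congr rfl fun V' hV' => ?_
          exact sum_X_signs hn V V' (hT V hV) (hT V' hV')
      _ = (S.card : ℤ) * (T.card * 4 ^ m) := by
          congr 1
          rw [Finset.sum_congr rfl fun V hV => Finset.sum_ite_eq T V (fun _ => (4:ℤ) ^ m)]
          rw [Finset.sum_congr rfl fun V hV => if_pos hV, Finset.sum_const, nsmul_eq_mul]
      _ ≤ (4 ^ m : ℤ) * (4 ^ m * 4 ^ m) := by
          have hT0 : (0:ℤ) ≤ T.card := Int.natCast_nonneg _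
          have h4 : (0:ℤ) ≤ 4 ^ m := by positivity
          apply mul_le_mul hcardS (mul_le_mul_of_nonneg_right hcardT h4)
            (mul_nonneg hT0 h4) (by positivity)
      _ = 2 ^ (6 * m) := by
          simp only [show (4:ℤ) = 2 ^ 2 from by norm_num, ← pow_mul, ← pow_add]
          congr 1
          ring
  have key3 : |D| ≤ 2 ^ (3 * m) := by
    apply abs_le_of_sq_le_sq _ (by positivity)
    calc D ^ 2 ≤ 2 ^ (6 * m) := key2
      _ = ((2:ℤ) ^ (3 * m)) ^ 2 := by rw [← pow_mul]; congr 1; ring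
  have hfin : ((R ∩ A).card : ℤ) - ((R ∩ B).card : ℤ) = -D := by rw [hDR]; ring
  rw [hfin, abs_neg]
  exact key3
end

section
/- Let G be a context-free grammar over alphabet Σ such that the language of G is nonempty, finite, and all words in L(G) have the same length, and such that every nonterminal of G appears in at least one parse tree of a word in L(G). Then for every nonterminal A of G, all words derivable from A in G have the same length. -/
lemma rewrites_append_split {T N : Type*} {r : ContextFreeRule T N}
    {x y v : List (Symbol T N)} (h : r.Rewrites (x ++ y) v) :
    (∃ x', r.Rewrites x x' ∧ v = x' ++ y) ∨ (∃ y', r.Rewrites y y' ∧ v = x ++ y') := by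
  obtain ⟨p, q, hpq, rfl⟩ := h.exists_parts
  rw [List.append_assoc] at hpq
  rcases List.append_eq_append_iff.mp hpq with ⟨a, rfl, ha⟩ | ⟨c, rfl, hc⟩
  · right
    refine ⟨a ++ r.output ++ q, ?_, by simp [ha, List.append_assoc]⟩
    rw [ha]
    simpa [List.append_assoc] using r.rewrites_of_exists_parts a q
  · match c, hc with
    | [], hc =>
      right
      refine ⟨r.output ++ q, ?_, by simp [List.append_assoc]⟩
      have hy : y = [Symbol.nonterminal r.input] ++ q := by simpa using hc.symm
      rw [hy]
      simpa using r.rewrites_of_exists_parts [] q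
    | s :: c', hc =>
      left
      obtain ⟨hs, hq⟩ : Symbol.nonterminal r.input = s ∧ q = c' ++ y := by simpa using hc
      subst hs hq
      exact ⟨p ++ r.output ++ c', by simpa using r.rewrites_of_exists_parts p c',
        by simp [List.append_assoc]⟩

lemma derives_append_split {T : Type*} {g : ContextFreeGrammar T}
    {x y w : List (Symbol T g.NT)} (h : g.Derives (x ++ y) w) :
    ∃ w₁ w₂, w = w₁ ++ w₂ ∧ g.Derives x w₁ ∧ g.Derives y w₂ := by
  induction h with
  | refl => exact ⟨x, y, rfl, ContextFreeGrammar.Derives.refl x, ContextFreeGrammar.Derives.refl y⟩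
  | tail _ last ih =>
    obtain ⟨w₁, w₂, rfl, hx, hy⟩ := ih
    obtain ⟨r, hr, hrw⟩ := last
    rcases rewrites_append_split hrw with ⟨x', hx', rfl⟩ | ⟨y', hy', rfl⟩
    · exact ⟨x', w₂, rfl, hx.trans_produces ⟨r, hr, hx'⟩, hy⟩
    · exact ⟨w₁, y', rfl, hx, hy.trans_produces ⟨r, hr, hy'⟩⟩

/-- "Every nonterminal appears in at least one parse tree of a word of the language" is
formalised as: every nonterminal occurs in some sentential form reachable from the start
symbol from which a word of terminals can still be derived. -/
theorem stmt_12 {T : Type*} (g : ContextFreeGrammar T)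
    (hne : g.language.Nonempty)
    (hfin : Set.Finite (g.language : Set (List T)))
    (hlen : ∃ n : ℕ, ∀ w ∈ g.language, w.length = n)
    (happ : ∀ A : g.NT, ∃ u v : List (Symbol T g.NT),
      g.Derives [Symbol.nonterminal g.initial] (u ++ [Symbol.nonterminal A] ++ v) ∧
      ∃ w : List T, g.Derives (u ++ [Symbol.nonterminal A] ++ v)
        (w.map Symbol.terminal) ∧ w ∈ g.language) :
    ∀ A : g.NT, ∀ w₁ w₂ : List T,
      g.Derives [Symbol.nonterminal A] (w₁.map Symbol.terminal) →
      g.Derives [Symbol.nonterminal A] (w₂.map Symbol.terminal) →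
      w₁.length = w₂.length := by
  obtain ⟨n, hn⟩ := hlen
  intro A w₁ w₂ h₁ h₂
  obtain ⟨u, v, hder, w, hw, hwl⟩ := happ A
  obtain ⟨z₁, z₂, hz, hu1, hv⟩ := derives_append_split
    (x := u ++ [Symbol.nonterminal A]) (y := v)
    (by simpa [List.append_assoc] using hw)
  obtain ⟨z₃, z₄, rfl, hu, hA⟩ := derives_append_split hu1
  rw [List.append_assoc] at hz
  obtain ⟨a, rest, hmap, rfl, hrest⟩ := List.map_eq_append_iff.mp hz
  obtain ⟨b, c, hmap', rfl, rfl⟩ := List.map_eq_append_iff.mp hrest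
  have key : ∀ w' : List T, g.Derives [Symbol.nonterminal A] (w'.map Symbol.terminal) →
      a.length + w'.length + c.length = n := by
    intro w' hw'
    have hstep : g.Derives (u ++ [Symbol.nonterminal A] ++ v)
        ((a ++ w' ++ c).map Symbol.terminal) := by
      have s1 : g.Derives (u ++ ([Symbol.nonterminal A] ++ v))
          (a.map Symbol.terminal ++ ([Symbol.nonterminal A] ++ v)) :=
        hu.append_right _
      have s2 : g.Derives (a.map Symbol.terminal ++ ([Symbol.nonterminal A] ++ v))
          (a.map Symbol.terminal ++ (w'.map Symbol.terminal ++ v)) :=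
        (hw'.append_right v).append_left _
      have s3 : g.Derives (a.map Symbol.terminal ++ (w'.map Symbol.terminal ++ v))
          (a.map Symbol.terminal ++ (w'.map Symbol.terminal ++ c.map Symbol.terminal)) :=
        (hv.append_left _).append_left _
      simpa [List.append_assoc] using (s1.trans s2).trans s3
    have hmem : (a ++ w' ++ c) ∈ g.language :=
      (g.mem_language_iff _).mpr (hder.trans hstep)
    have := hn _ hmem
    simp at this
    omega
  have k1 := key w₁ h₁
  have k2 := key w₂ h₂
  omega
end

section
/- Let n ≥ 8, Z = {z_1, ..., z_{2n}}, and partition Z into 2m blocks (intervals) of size 4 where n = 4m. Let (Π₀, Π₁) be a partition of Z induced by an interval [a, b] with 2n/3 ≤ |Π₀|, |Π₁| ≤ 4n/3, and let R be a (Π₀, Π₁)-set rectangle, i.e., R = {s ∪ t : s ∈ S, t ∈ T} for some S ⊆ 𝒫(Π₀), T ⊆ 𝒫(Π₁). Then there exists a partition (Γ₀, Γ₁) of Z induced by an interval, with 2n/3 ≤ |Γ₀|, |Γ₁| ≤ 4n/3, such that every size-4 block is entirely contained in Γ₀ or in Γ₁ ('neat'), and there exist pairwise disjoint (Γ₀,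 Γ₁)-set rectangles R_1, ..., R_k with k ≤ 256 and R = R_1 ∪ ... ∪ R_k. -/
/-!
Round the interval `[a, b]` outwards or inwards to the nearest interval `[a', b']` that starts
and ends at block boundaries and still has a balanced length; this moves at most
`3 + 5 = 8` points across the cut. Splitting `R` according to the trace `u ∩ D` of its members on
the set `D` of moved points gives at most `2 ^ 8` pieces. On each piece the points of `D` are
frozen, so they can be reassigned to either side freely, and every piece is a rectangle for the
new partition.
-/

/-- `R` is a `(P0, P1)`-set rectangle: `R = {s ∪ t : s ∈ S, t ∈ T}` for some
`S ⊆ 𝒫(P0)`, `T ⊆ 𝒫(P1)`. -/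
def IsSetRect {n : ℕ} (P0 P1 : Finset (Fin (2 * n)))
    (R : Set (Finset (Fin (2 * n)))) : Prop :=
  ∃ S T : Set (Finset (Fin (2 * n))),
    (∀ s ∈ S, s ⊆ P0) ∧ (∀ t ∈ T, t ⊆ P1) ∧
    R = {u | ∃ s ∈ S, ∃ t ∈ T, u = s ∪ t}

/-- `(P0, P1)` is a partition of `Fin (2*n)` induced by an interval `[a, b]`
(0-indexed), with both parts of size between `2n/3` and `4n/3` (stated
multiplicatively). -/
def IsOrderedBalancedPartition (n : ℕ) (P0 P1 : Finset (Fin (2 * n))) : Prop :=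
  P0 ∪ P1 = Finset.univ ∧ Disjoint P0 P1 ∧
  (∃ a b : ℕ, a ≤ b ∧ b < 2 * n ∧
    (P0 = Finset.univ.filter (fun z : Fin (2 * n) => a ≤ z.1 ∧ z.1 ≤ b) ∨
     P1 = Finset.univ.filter (fun z : Fin (2 * n) => a ≤ z.1 ∧ z.1 ≤ b))) ∧
  2 * n ≤ 3 * P0.card ∧ 3 * P0.card ≤ 4 * n ∧
  2 * n ≤ 3 * P1.card ∧ 3 * P1.card ≤ 4 * n

/-- The `i`-th size-4 block (for `i < n/2`, i.e. `i < 2m` where `n = 4m`) of the ground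
set `Fin (2*n)` is `{4*i, ..., 4*i+3}`. -/
def NeatPartition (n : ℕ) (G0 G1 : Finset (Fin (2 * n))) : Prop :=
  ∀ i < n / 2,
    (Finset.univ.filter (fun z : Fin (2 * n) => 4 * i ≤ z.1 ∧ z.1 < 4 * i + 4)) ⊆ G0 ∨
    (Finset.univ.filter (fun z : Fin (2 * n) => 4 * i ≤ z.1 ∧ z.1 < 4 * i + 4)) ⊆ G1

open Finset

section SetRect

variable {n : ℕ} {P0 P1 G0 G1 D c : Finset (Fin (2 * n))} {R : Set (Finset (Fin (2 * n)))}

theorem IsSetRect.symm (hR : IsSetRect P0 P1 R) : IsSetRect P1 P0 R := by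
  obtain ⟨S, T, hS, hT, rfl⟩ := hR
  refine ⟨T, S, hT, hS, ?_⟩
  ext u
  constructor
  · rintro ⟨s, hs, t, ht, rfl⟩
    exact ⟨t, ht, s, hs, union_comm s t⟩
  · rintro ⟨t, ht, s, hs, rfl⟩
    exact ⟨s, hs, t, ht, union_comm t s⟩

theorem IsSetRect.restrict_trace (hP : Disjoint P0 P1) (hc : c ⊆ P0 ∪ P1)
    (hR : IsSetRect P0 P1 R) : IsSetRect P0 P1 {u | u ∈ R ∧ u ∩ D = c} := by
  obtain ⟨S, T, hS, hT, rfl⟩ := hR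
  refine ⟨{s | s ∈ S ∧ s ∩ D = c ∩ P0}, {t | t ∈ T ∧ t ∩ D = c ∩ P1},
    fun s hs => hS s hs.1, fun t ht => hT t ht.1, ?_⟩
  have key : ∀ s ∈ S, ∀ t ∈ T, (s ∪ t) ∩ D = c ↔ s ∩ D = c ∩ P0 ∧ t ∩ D = c ∩ P1 := by
    intro s hs t ht
    have hs' : ∀ x, x ∈ s → x ∈ P0 := fun x hx => hS s hs hx
    have ht' : ∀ x, x ∈ t → x ∈ P1 := fun x hx => hT t ht hx
    have hP' : ∀ x, x ∈ P0 → x ∉ P1 := fun _ => @disjoint_left.1 hP _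
    have hc' : ∀ x, x ∈ c → x ∈ P0 ∨ x ∈ P1 := fun x hx => mem_union.1 (hc hx)
    simp only [Finset.ext_iff, mem_inter, mem_union]
    grind
  ext u
  constructor
  · rintro ⟨⟨s, hs, t, ht, rfl⟩, hu⟩
    obtain ⟨h0, h1⟩ := (key s hs t ht).1 hu
    exact ⟨s, ⟨hs, h0⟩, t, ⟨ht, h1⟩, rfl⟩
  · rintro ⟨s, ⟨hs, h0⟩, t, ⟨ht, h1⟩, rfl⟩
    exact ⟨⟨s, hs, t, ht, rfl⟩, (key s hs t ht).2 ⟨h0, h1⟩⟩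

/-- With the trace on `D` frozen to `c`, `s ∪ t = (s \ D ∪ c ∩ G0) ∪ (t \ D ∪ c \ G0)`. -/
theorem IsSetRect.of_trace_eq (hG : G0 ∪ G1 = univ) (h0 : P0 \ D ⊆ G0) (h1 : P1 \ D ⊆ G1)
    (hR : IsSetRect P0 P1 R) (htr : ∀ u ∈ R, u ∩ D = c) : IsSetRect G0 G1 R := by
  obtain ⟨S, T, hS, hT, rfl⟩ := hR
  refine ⟨(fun s => s \ D ∪ c ∩ G0) '' S, (fun t => t \ D ∪ c \ G0) '' T, ?_, ?_, ?_⟩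
  · rintro _ ⟨s, hs, rfl⟩
    exact union_subset ((sdiff_subset_sdiff (hS s hs) le_rfl).trans h0) inter_subset_right
  · rintro _ ⟨t, ht, rfl⟩
    refine union_subset ((sdiff_subset_sdiff (hT t ht) le_rfl).trans h1) fun x hx => ?_
    have hx' : x ∈ G0 ∪ G1 := hG ▸ mem_univ x
    exact (mem_union.1 hx').resolve_left (mem_sdiff.1 hx).2
  have key : ∀ s ∈ S, ∀ t ∈ T, (s \ D ∪ c ∩ G0) ∪ (t \ D ∪ c \ G0) = s ∪ t := by
    intro s hs t ht
    have htr' := Finset.ext_iff.1 (htr _ ⟨s, hs, t, ht, rfl⟩)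
    ext x
    have := htr' x
    simp only [mem_union, mem_inter, mem_sdiff] at this ⊢
    tauto
  ext u
  constructor
  · rintro ⟨s, hs, t, ht, rfl⟩
    exact ⟨_, ⟨s, hs, rfl⟩, _, ⟨t, ht, rfl⟩, (key s hs t ht).symm⟩
  · rintro ⟨_, ⟨s, hs, rfl⟩, _, ⟨t, ht, rfl⟩, rfl⟩
    exact ⟨s, hs, t, ht, key s hs t ht⟩

theorem IsSetRect.exists_disjoint_iUnion (hP : Disjoint P0 P1) (hG : G0 ∪ G1 = univ)
    (hR : IsSetRect P0 P1 R) :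
    ∃ Rs : (P0 \ G0 ∪ P1 \ G1).powerset → Set (Finset (Fin (2 * n))),
      (∀ c, IsSetRect G0 G1 (Rs c)) ∧ Pairwise (Function.onFun Disjoint Rs) ∧
      R = ⋃ c, Rs c := by
  set D := P0 \ G0 ∪ P1 \ G1
  refine ⟨fun c => {u | u ∈ R ∧ u ∩ D = c}, fun c => ?_, fun c c' hcc' => ?_, ?_⟩
  · have hc : (c : Finset (Fin (2 * n))) ⊆ D := mem_powerset.1 c.2
    have hD : D ⊆ P0 ∪ P1 := union_subset_union sdiff_subset sdiff_subset
    refine (hR.restrict_trace hP (hc.trans hD)).of_trace_eq hG ?_ ?_ fun u hu => hu.2 <;>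
      intro x <;> simp only [D, mem_sdiff, mem_union] <;> tauto
  · exact Set.disjoint_left.2 fun u hu hu' => hcc' (Subtype.ext (hu.2.symm.trans hu'.2))
  · ext u
    simp only [Set.mem_iUnion, Set.mem_ofPred_eq]
    exact ⟨fun hu => ⟨⟨u ∩ D, mem_powerset.2 inter_subset_right⟩, hu, rfl⟩,
      fun ⟨_, hu, _⟩ => hu⟩

end SetRect

def finIcc (N a b : ℕ) : Finset (Fin N) :=
  univ.filter fun z => a ≤ z.1 ∧ z.1 ≤ b

section FinIcc

variable {N a b a' b' : ℕ}

theorem card_finIcc (hb : b < N) : (finIcc N a b).card = b + 1 - a := by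
  have : (finIcc N a b).map Fin.valEmbedding = Icc a b := by
    ext x
    simp only [finIcc, mem_map, mem_filter, mem_univ, true_and, Fin.valEmbedding_apply, mem_Icc]
    exact ⟨fun ⟨z, hz, hzx⟩ => hzx ▸ hz, fun hx => ⟨⟨x, by omega⟩, hx, rfl⟩⟩
  rw [← card_map, this, Nat.card_Icc]

theorem card_finIcc_sdiff_finIcc :
    (finIcc N a b \ finIcc N a' b').card ≤ (a' - a) + (b - b') := by
  have : (finIcc N a b \ finIcc N a' b').map Fin.valEmbedding ⊆ Ico a a' ∪ Ioc b' b := by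
    intro x
    simp only [finIcc, mem_map, mem_sdiff, mem_filter, mem_univ, true_and,
      Fin.valEmbedding_apply, mem_union, mem_Ico, mem_Ioc]
    rintro ⟨z, hz, rfl⟩
    omega
  calc (finIcc N a b \ finIcc N a' b').card
      ≤ (Ico a a' ∪ Ioc b' b).card := card_map Fin.valEmbedding ▸ card_le_card this
    _ ≤ (a' - a) + (b - b') := by
      simpa only [Nat.card_Ico, Nat.card_Ioc] using card_union_le (Ico a a') (Ioc b' b)

variable {n : ℕ}

theorem neatPartition_finIcc_compl (ha : a % 4 = 0) (hb : b % 4 = 3) :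
    NeatPartition n (finIcc (2 * n) a b) (finIcc (2 * n) a b)ᶜ := by
  intro i _
  by_cases h : a ≤ 4 * i ∧ 4 * i ≤ b
  · left
    intro z hz
    simp only [finIcc, mem_filter, mem_univ, true_and] at hz ⊢
    omega
  · right
    intro z hz
    simp only [finIcc, mem_compl, mem_filter, mem_univ, true_and] at hz ⊢
    omega

theorem isOrderedBalancedPartition_finIcc_compl (hab : a ≤ b) (hb : b < 2 * n)
    (h₁ : 2 * n ≤ 3 * (b + 1 - a)) (h₂ : 3 * (b + 1 - a) ≤ 4 * n) :
    IsOrderedBalancedPartition n (finIcc (2 * n) a b) (finIcc (2 * n) a b)ᶜ := by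
  refine ⟨union_compl _, disjoint_compl_right, ⟨a, b, hab, hb, Or.inl rfl⟩, ?_⟩
  rw [card_compl, Fintype.card_fin, card_finIcc hb]
  omega

end FinIcc

theorem IsOrderedBalancedPartition.symm {n : ℕ} {P0 P1 : Finset (Fin (2 * n))}
    (h : IsOrderedBalancedPartition n P0 P1) : IsOrderedBalancedPartition n P1 P0 := by
  obtain ⟨hcov, hdisj, ⟨a, b, hab, hb, hP⟩, h₀, h₁, h₂, h₃⟩ := h
  exact ⟨union_comm P0 P1 ▸ hcov, hdisj.symm, ⟨a, b, hab, hb, hP.symm⟩, h₂, h₃, h₀, h₁⟩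

theorem exists_block_aligned_near {n m a b : ℕ} (hm : n = 4 * m) (hab : a ≤ b) (hb : b < 2 * n)
    (h₁ : 2 * n ≤ 3 * (b + 1 - a)) (h₂ : 3 * (b + 1 - a) ≤ 4 * n) :
    ∃ a' b' : ℕ, a' % 4 = 0 ∧ b' % 4 = 3 ∧ a' ≤ b' ∧ b' < 2 * n ∧
      2 * n ≤ 3 * (b' + 1 - a') ∧ 3 * (b' + 1 - a') ≤ 4 * n ∧
      (a - a') + (a' - a) + (b - b') + (b' - b) ≤ 8 := by
  -- `a'` rounds `a` down to a block boundary; `j` rounds the length down to whole blocks,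
  -- clamped to the balanced range `[2m/3, 4m/3]`.
  set a' := a - a % 4
  set j := max ((2 * m + 2) / 3) (min (4 * m / 3) ((b - a' + 1) / 4))
  exact ⟨a', a' + 4 * j - 1, by omega⟩

theorem exists_neat_near_finIcc {n m a b : ℕ} (hm : n = 4 * m) {P0 P1 : Finset (Fin (2 * n))}
    (hpart : IsOrderedBalancedPartition n P0 P1) (hab : a ≤ b) (hb : b < 2 * n)
    (hP0 : P0 = finIcc (2 * n) a b) :
    ∃ G0 G1 : Finset (Fin (2 * n)), IsOrderedBalancedPartition n G0 G1 ∧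
      NeatPartition n G0 G1 ∧ (P0 \ G0 ∪ P1 \ G1).card ≤ 8 := by
  obtain ⟨hcov, hdisj, -, h₁, h₂, -, -⟩ := hpart
  have hP1 : P1 = P0ᶜ := (IsCompl.compl_eq ⟨hdisj, codisjoint_iff.2 hcov⟩).symm
  rw [hP0, card_finIcc hb] at h₁ h₂
  obtain ⟨a', b', ha', hb', hab', hb'n, h₁', h₂', hnear⟩ :=
    exists_block_aligned_near hm hab hb h₁ h₂
  refine ⟨finIcc (2 * n) a' b', (finIcc (2 * n) a' b')ᶜ,
    isOrderedBalancedPartition_finIcc_compl hab' hb'n h₁' h₂',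
    neatPartition_finIcc_compl ha' hb', ?_⟩
  rw [hP1, compl_sdiff_compl, hP0]
  calc (finIcc (2 * n) a b \ finIcc (2 * n) a' b' ∪ finIcc (2 * n) a' b' \ finIcc (2 * n) a b).card
      ≤ ((a' - a) + (b - b')) + ((a - a') + (b' - b)) :=
        (card_union_le _ _).trans (add_le_add card_finIcc_sdiff_finIcc card_finIcc_sdiff_finIcc)
    _ ≤ 8 := by omega

theorem exists_neat_refinement_of_eq_finIcc {n m a b : ℕ} (hm : n = 4 * m)
    {P0 P1 : Finset (Fin (2 * n))} (hpart : IsOrderedBalancedPartition n P0 P1)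
    (hab : a ≤ b) (hb : b < 2 * n) (hP0 : P0 = finIcc (2 * n) a b)
    {R : Set (Finset (Fin (2 * n)))} (hR : IsSetRect P0 P1 R) :
    ∃ G0 G1 : Finset (Fin (2 * n)),
      IsOrderedBalancedPartition n G0 G1 ∧ NeatPartition n G0 G1 ∧
      ∃ k : ℕ, k ≤ 256 ∧ ∃ Rs : Fin k → Set (Finset (Fin (2 * n))),
        (∀ i, IsSetRect G0 G1 (Rs i)) ∧
        Pairwise (Function.onFun Disjoint Rs) ∧
        R = ⋃ i, Rs i := by
  obtain ⟨G0, G1, hG, hneat, hD⟩ := exists_neat_near_finIcc hm hpart hab hb hP0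
  obtain ⟨Rs, hrect, hdisj, rfl⟩ := hR.exists_disjoint_iUnion hpart.2.1 hG.1
  let e := (Fintype.equivFin (P0 \ G0 ∪ P1 \ G1).powerset).symm
  have hk : Fintype.card (P0 \ G0 ∪ P1 \ G1).powerset ≤ 256 := by
    rw [Fintype.card_coe, card_powerset]
    exact (Nat.pow_le_pow_right two_pos hD).trans_eq rfl
  exact ⟨G0, G1, hG, hneat, _, hk, Rs ∘ e, fun i => hrect (e i),
    hdisj.comp_of_injective e.injective, (e.surjective.iUnion_comp Rs).symm⟩

theorem stmt_18_general (n m : ℕ) (hm : n = 4 * m)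
    (P0 P1 : Finset (Fin (2 * n))) (hpart : IsOrderedBalancedPartition n P0 P1)
    (R : Set (Finset (Fin (2 * n)))) (hR : IsSetRect P0 P1 R) :
    ∃ G0 G1 : Finset (Fin (2 * n)),
      IsOrderedBalancedPartition n G0 G1 ∧ NeatPartition n G0 G1 ∧
      ∃ k : ℕ, k ≤ 256 ∧ ∃ Rs : Fin k → Set (Finset (Fin (2 * n))),
        (∀ i, IsSetRect G0 G1 (Rs i)) ∧
        Pairwise (Function.onFun Disjoint Rs) ∧
        R = ⋃ i, Rs i := by
  obtain ⟨a, b, hab, hb, hP0 | hP1⟩ := hpart.2.2.1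
  · exact exists_neat_refinement_of_eq_finIcc hm hpart hab hb hP0 hR
  · exact exists_neat_refinement_of_eq_finIcc hm hpart.symm hab hb hP1 hR.symm

theorem stmt_18 (n m : ℕ) (hn : 8 ≤ n) (hm : n = 4 * m)
    (P0 P1 : Finset (Fin (2 * n))) (hpart : IsOrderedBalancedPartition n P0 P1)
    (R : Set (Finset (Fin (2 * n)))) (hR : IsSetRect P0 P1 R) :
    ∃ G0 G1 : Finset (Fin (2 * n)),
      IsOrderedBalancedPartition n G0 G1 ∧ NeatPartition n G0 G1 ∧
      ∃ k : ℕ, k ≤ 256 ∧ ∃ Rs : Fin k → Set (Finset (Fin (2 * n))),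
        (∀ i, IsSetRect G0 G1 (Rs i)) ∧
        Pairwise (Function.onFun Disjoint Rs) ∧
        R = ⋃ i, Rs i :=
  stmt_18_general n m hm P0 P1 hpart R hR
end
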